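/- Let ν be a Borel probability measure on ℝ whose support is contained in a compact interval [0, L] with L > 0, satisfying ν({0}) = 1/2 and ν((0,∞)) = 1/2, and define δ(t) = ν((0,t)) for t > 0. Then every empirical median satisfies m̂_n ≥ 0 almost surely, and for every n ≥ 1 and every t > 0, P(m̂_n ≥ t) ≤ (1 − 4δ(t)²)^{n/2}. -/

import Mathlib

/-!
A median of a sample has at least half of the sample points on each side of it: moving it by
a small `ε` towards the side with fewer points would decrease the sum of absolute deviations.
As all `Y k ≥ 0` almost surely, this forces `m̂_n ≥ 0`. If `m̂_n ≥ t`, at least `n / 2` of the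
`Y k` lie in `[t, ∞)`, an event of probability `p = 1/2 - δ(t)` for each `k`, and the Chernoff
bound with `e^s = (1 - p) / p` bounds this binomial tail by
`(4 p (1 - p))^{n/2} = (1 - 4 δ(t)²)^{n/2}`.
-/

open MeasureTheory ProbabilityTheory Real Finset Filter Topology

section SampleMedian

variable {ι : Type*} {s : Finset ι} {y : ι → ℝ} {m : ℝ}

def IsSampleMedian (s : Finset ι) (y : ι → ℝ) (m : ℝ) : Prop :=
  ∀ β, ∑ k ∈ s, |m - y k| ≤ ∑ k ∈ s, |β - y k|

lemma IsSampleMedian.neg (hm : IsSampleMedian s y m) : IsSampleMedian s (-y) (-m) := by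
  have hneg (a b : ℝ) : |-a - -b| = |a - b| := by rw [neg_sub_neg, abs_sub_comm]
  intro β
  rw [← neg_neg β]
  simpa only [Pi.neg_apply, hneg] using hm (-β)

lemma IsSampleMedian.card_le_two_mul_card_ge (hm : IsSampleMedian s y m) :
    #s ≤ 2 * #{k ∈ s | m ≤ y k} := by
  obtain ⟨ε, hε, hgap⟩ : ∃ ε > 0, ∀ k ∈ s, y k < m → y k ≤ m - ε := by
    have h : ∀ᶠ ε in 𝓝[>] (0 : ℝ), ∀ k ∈ s, y k < m → y k ≤ m - ε := by
      refine s.eventually_all.2 fun k _ => ?_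
      rcases lt_or_ge (y k) m with hk | hk
      · exact (eventually_nhdsWithin_of_eventually_nhds (eventually_lt_nhds (sub_pos.2 hk))).mono
          fun ε hε _ => by linarith
      · exact Eventually.of_forall fun _ h => absurd h hk.not_gt
    exact (h.and self_mem_nhdsWithin).exists.imp fun ε h => ⟨h.2, h.1⟩
  have hshift : ∀ k ∈ s, |m - ε - y k| = |m - y k| + if m ≤ y k then ε else -ε := by
    intro k hk
    split_ifs with hmk
    · rw [abs_of_nonpos (by linarith), abs_of_nonpos (by linarith)]; ring
    · have := hgap k hk (not_le.1 hmk)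
      rw [abs_of_nonneg (by linarith), abs_of_nonneg (by linarith)]; ring
  have h := hm (m - ε)
  rw [sum_congr rfl hshift, sum_add_distrib, sum_ite, sum_const, sum_const] at h
  have hcard := card_filter_add_card_filter_not (s := s) (fun k => m ≤ y k)
  have : #{k ∈ s | ¬m ≤ y k} ≤ #{k ∈ s | m ≤ y k} := by
    simp only [nsmul_eq_mul] at h
    have : (#{k ∈ s | ¬m ≤ y k} : ℝ) * ε ≤ #{k ∈ s | m ≤ y k} * ε := by linarith
    exact_mod_cast le_of_mul_le_mul_right this hε
  omega

lemma IsSampleMedian.card_le_two_mul_card_le (hm : IsSampleMedian s y m) :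
    #s ≤ 2 * #{k ∈ s | y k ≤ m} := by
  simpa using hm.neg.card_le_two_mul_card_ge

lemma IsSampleMedian.card_div_two_le_sum_indicator {t : ℝ} (hm : IsSampleMedian s y m)
    (ht : t ≤ m) : (#s : ℝ) / 2 ≤ ∑ k ∈ s, (Set.Ici t).indicator 1 (y k) := by
  have hcount : #s ≤ 2 * #{k ∈ s | t ≤ y k} :=
    hm.card_le_two_mul_card_ge.trans <| Nat.mul_le_mul_left 2 <|
      card_le_card <| monotone_filter_right _ fun _ _ h => ht.trans h
  classical
  simp only [Set.indicator_apply, Set.mem_Ici, Pi.one_apply, sum_boole]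
  have : (#s : ℝ) ≤ 2 * #{k ∈ s | t ≤ y k} := by exact_mod_cast hcount
  linarith

lemma IsSampleMedian.exists_le (hm : IsSampleMedian s y m) (hs : s.Nonempty) :
    ∃ k ∈ s, y k ≤ m := by
  have := hm.card_le_two_mul_card_le
  obtain ⟨k, hk⟩ := card_pos.1 (by have := hs.card_pos; omega : 0 < #{k ∈ s | y k ≤ m})
  exact ⟨k, mem_filter.1 hk⟩

end SampleMedian

lemma measureReal_Ioo_add_measureReal_Ici {α : Type*} [LinearOrder α] [TopologicalSpace α]
    [OrderClosedTopology α] [MeasurableSpace α] [OpensMeasurableSpace α] (μ : Measure α)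
    [IsFiniteMeasure μ] {a b : α} (hab : a < b) :
    μ.real (Set.Ioo a b) + μ.real (Set.Ici b) = μ.real (Set.Ioi a) := by
  rw [← measureReal_union ((Set.Iio_disjoint_Ici le_rfl).mono_left Set.Ioo_subset_Iio_self)
    measurableSet_Ici, Set.Ioo_union_Ici_eq_Ioi hab]

lemma ae_nonneg_of_measure_Icc_eq_one {ν : Measure ℝ} [IsProbabilityMeasure ν] {L : ℝ}
    (h : ν (Set.Icc 0 L) = 1) : ∀ᵐ x ∂ν, 0 ≤ x :=
  ((ae_mem_iff_measure_eq measurableSet_Icc.nullMeasurableSet).2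
    (by rw [h, measure_univ])).mono fun _ hx => hx.1

section BinomialTail

variable {Ω : Type*} [MeasurableSpace Ω] {P : Measure Ω} [IsProbabilityMeasure P]

lemma mgf_indicator_one {E : Set Ω} (hE : MeasurableSet E) (s : ℝ) :
    mgf (E.indicator 1) P s = 1 - P.real E + P.real E * exp s := by
  classical
  have h : (fun ω => exp (s * E.indicator 1 ω)) = E.piecewise (fun _ => exp s) fun _ => 1 := by
    ext ω
    by_cases hω : ω ∈ E <;> simp [hω]
  rw [mgf, h, integral_piecewise hE (integrable_const _).integrableOn
    (integrable_const _).integrableOn, setIntegral_const, setIntegral_const,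
    probReal_compl_eq_one_sub hE]
  simp only [smul_eq_mul]
  ring

lemma exp_neg_log_div_mul_two_mul_pow {p q : ℝ} (hp : 0 < p) (hq : 0 < q) (n : ℕ) :
    exp (-log (q / p) * (n / 2)) * (2 * q) ^ n = (4 * p * q) ^ ((n : ℝ) / 2) := by
  have hexp : exp (-log (q / p) * (n / 2)) = (p / q) ^ ((n : ℝ) / 2) := by
    rw [rpow_def_of_pos (div_pos hp hq), ← log_inv, inv_div]
  have hpow : (2 * q) ^ n = ((2 * q) ^ 2) ^ ((n : ℝ) / 2) := by
    rw [← rpow_natCast_mul (by positivity), ← rpow_natCast]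
    congr 1
    push_cast
    ring
  rw [hexp, hpow, ← mul_rpow (by positivity) (by positivity)]
  congr 1
  field_simp
  ring

lemma measureReal_half_le_sum_indicator_eq_zero {E : ℕ → Set Ω} (hE : ∀ k, MeasurableSet (E k))
    (hp : ∀ k, P.real (E k) = 0) {n : ℕ} (hn : 0 < n) :
    P.real {ω | (n : ℝ) / 2 ≤ ∑ k ∈ range n, (E k).indicator 1 ω} = 0 := by
  have hint k : Integrable ((E k).indicator (1 : Ω → ℝ)) P :=
    (integrable_const 1).indicator (hE k)
  have hmarkov : (n : ℝ) / 2 * P.real {ω | (n : ℝ) / 2 ≤ ∑ k ∈ range n, (E k).indicator 1 ω} ≤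
      ∫ ω, ∑ k ∈ range n, (E k).indicator 1 ω ∂P :=
    mul_meas_ge_le_integral_of_nonneg
      (ae_of_all _ fun ω => sum_nonneg fun k _ => Set.indicator_nonneg (fun _ _ => zero_le_one) ω)
      (integrable_finsetSum _ fun k _ => hint k) _
  rw [integral_finsetSum _ fun k _ => hint k] at hmarkov
  simp only [integral_indicator_one (hE _), hp, sum_const_zero] at hmarkov
  exact le_antisymm (nonpos_of_mul_nonpos_right hmarkov (by positivity)) measureReal_nonneg

lemma measureReal_half_le_sum_indicator_le {E : ℕ → Set Ω} (hE : ∀ k, MeasurableSet (E k))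
    (hind : iIndepFun (fun k => (E k).indicator (1 : Ω → ℝ)) P) {p : ℝ}
    (hp : ∀ k, P.real (E k) = p) (hp_le : p ≤ 1 / 2) (n : ℕ) :
    P.real {ω | (n : ℝ) / 2 ≤ ∑ k ∈ range n, (E k).indicator 1 ω} ≤
      (4 * p * (1 - p)) ^ ((n : ℝ) / 2) := by
  have hmeas k : Measurable ((E k).indicator (1 : Ω → ℝ)) := measurable_const.indicator (hE k)
  rcases (hp 0 ▸ measureReal_nonneg : 0 ≤ p).eq_or_lt with rfl | hp_pos
  · -- the Chernoff parameter `log ((1 - p) / p)` below is not available for `p = 0`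
    rcases n.eq_zero_or_pos with rfl | hn
    · simp
    rw [measureReal_half_le_sum_indicator_eq_zero hE hp hn, mul_zero, zero_mul,
      zero_rpow (by positivity)]
  · set q := 1 - p
    have hq : 0 < q := by linarith
    have hs : 0 ≤ log (q / p) := log_nonneg ((one_le_div hp_pos).2 (by linarith))
    have hchernoff := measure_ge_le_exp_mul_mgf ((n : ℝ) / 2) hs
      (hind.integrable_exp_mul_sum hmeas (s := range n) fun k _ =>
        integrable_exp_mul_of_le _ 1 hs (hmeas k).aemeasurable
          (ae_of_all _ fun ω => Set.indicator_le_self' (fun _ _ => zero_le_one) ω))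
    rw [hind.mgf_sum hmeas] at hchernoff
    simp only [mgf_indicator_one (hE _), hp, exp_log (div_pos hq hp_pos), prod_const,
      card_range, Finset.sum_apply] at hchernoff
    have hmgf : 1 - p + p * (q / p) = 2 * q := by rw [mul_div_cancel₀ _ hp_pos.ne', two_mul]
    rwa [hmgf, exp_neg_log_div_mul_two_mul_pow hp_pos hq] at hchernoff

end BinomialTail

theorem stmt_17_general (ν : Measure ℝ) [IsProbabilityMeasure ν]
    (L : ℝ) (hsupp : ν (Set.Icc 0 L) = 1)
    (hright : ν (Set.Ioi 0) = 1 / 2)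
    {Ω : Type*} [MeasurableSpace Ω] (P : Measure Ω) [IsProbabilityMeasure P]
    (Y : ℕ → Ω → ℝ)
    (hY_meas : ∀ k, Measurable (Y k))
    (hY_dist : ∀ k, P.map (Y k) = ν)
    (hY_indep : ProbabilityTheory.iIndepFun Y P)
    (mhat : ℕ → Ω → ℝ)
    (hmhat_med : ∀ n, 1 ≤ n → ∀ ω β,
      (∑ k ∈ Finset.range n, |mhat n ω - Y k ω|) ≤ ∑ k ∈ Finset.range n, |β - Y k ω|) :
    ∀ n : ℕ, 1 ≤ n →
      (∀ᵐ ω ∂P, 0 ≤ mhat n ω) ∧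
      (∀ t : ℝ, 0 < t →
        (P {ω | t ≤ mhat n ω}).toReal ≤
          (1 - 4 * (ν (Set.Ioo 0 t)).toReal ^ 2) ^ ((n : ℝ) / 2)) := by
  intro n hn
  have hmed ω : IsSampleMedian (range n) (fun k => Y k ω) (mhat n ω) := hmhat_med n hn ω
  refine ⟨?_, fun t ht => ?_⟩
  · have hY_nonneg : ∀ᵐ ω ∂P, ∀ k, 0 ≤ Y k ω := ae_all_iff.2 fun k =>
      ae_of_ae_map (hY_meas k).aemeasurable
        ((hY_dist k).symm ▸ ae_nonneg_of_measure_Icc_eq_one hsupp)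
    filter_upwards [hY_nonneg] with ω hω
    obtain ⟨k, -, hk⟩ := (hmed ω).exists_le (nonempty_range_iff.2 (by omega))
    exact (hω k).trans hk
  · have hsplit : ν.real (Set.Ioo 0 t) + ν.real (Set.Ici t) = 1 / 2 := by
      rw [measureReal_Ioo_add_measureReal_Ici ν ht, measureReal_def, hright]
      norm_num
    calc P.real {ω | t ≤ mhat n ω}
        ≤ P.real {ω | (n : ℝ) / 2 ≤ ∑ k ∈ range n, (Set.Ici t).indicator 1 (Y k ω)} :=
          measureReal_mono fun ω hω => by
            simpa only [card_range, Set.mem_ofPred_eq] using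
              (hmed ω).card_div_two_le_sum_indicator hω
      _ ≤ (4 * ν.real (Set.Ici t) * (1 - ν.real (Set.Ici t))) ^ ((n : ℝ) / 2) :=
          measureReal_half_le_sum_indicator_le (fun k => hY_meas k measurableSet_Ici)
            (hY_indep.comp _ fun _ => measurable_const.indicator measurableSet_Ici)
            (fun k => by rw [← map_measureReal_apply (hY_meas k) measurableSet_Ici, hY_dist k])
            (by linarith [measureReal_nonneg (μ := ν) (s := Set.Ioo 0 t)]) n
      _ = (1 - 4 * ν.real (Set.Ioo 0 t) ^ 2) ^ ((n : ℝ) / 2) := by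
          rw [show ν.real (Set.Ici t) = 1 / 2 - ν.real (Set.Ioo 0 t) by linarith]
          ring_nf

/-- One-sided concentration of the empirical median on the line: if `ν({0}) = 1/2`,
`ν((0,∞)) = 1/2` and the support of `ν` is contained in `[0,L]`, then every
empirical median is nonnegative almost surely, and for every `n ≥ 1` and `t > 0`,
`P(m̂_n ≥ t) ≤ (1 − 4δ(t)²)^{n/2}` where `δ(t) = ν((0,t))`. -/
theorem stmt_17 (ν : Measure ℝ) [IsProbabilityMeasure ν]
    (L : ℝ) (hL : 0 < L) (hsupp : ν (Set.Icc 0 L) = 1)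
    (hatom : ν {(0 : ℝ)} = 1 / 2) (hright : ν (Set.Ioi 0) = 1 / 2)
    {Ω : Type*} [MeasurableSpace Ω] (P : Measure Ω) [IsProbabilityMeasure P]
    (Y : ℕ → Ω → ℝ)
    (hY_meas : ∀ k, Measurable (Y k))
    (hY_dist : ∀ k, P.map (Y k) = ν)
    (hY_indep : ProbabilityTheory.iIndepFun Y P)
    (mhat : ℕ → Ω → ℝ)
    (hmhat_meas : ∀ n, Measurable (mhat n))
    (hmhat_med : ∀ n, 1 ≤ n → ∀ ω β,
      (∑ k ∈ Finset.range n, |mhat n ω - Y k ω|) ≤ ∑ k ∈ Finset.range n, |β - Y k ω|) :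
    ∀ n : ℕ, 1 ≤ n →
      (∀ᵐ ω ∂P, 0 ≤ mhat n ω) ∧
      (∀ t : ℝ, 0 < t →
        (P {ω | t ≤ mhat n ω}).toReal ≤
          (1 - 4 * (ν (Set.Ioo 0 t)).toReal ^ 2) ^ ((n : ℝ) / 2)) :=
  stmt_17_general ν L hsupp hright P Y hY_meas hY_dist hY_indep mhat hmhat_med
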